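/- arXiv:2302.07632 — 2 statements merged into one kernel-verified Lean document; each statement's English description precedes it below -/
import Mathlib

section
/- Let a, b₁, …, b₆ be integers satisfying: (i) a ≤ 0; (ii) 3a + Σᵢ bᵢ ≥ 0; (iii) 2a + Σ_{i∈I} bᵢ ≤ 0 for every 4-element subset I ⊆ {1,…,6}; (iv) a + bᵢ + bⱼ ≤ 1 for all 1 ≤ i < j ≤ 6; (v) 2a − bᵢ + Σⱼ bⱼ ≤ 1 for all 1 ≤ i ≤ 6. Then there exists k ∈ {0, 1} such that a = −2k and bᵢ = k for all i. -/
theorem stmt3 (a : ℤ) (b : Fin 6 → ℤ)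
    (h1 : a ≤ 0)
    (h2 : 0 ≤ 3 * a + ∑ i, b i)
    (h3 : ∀ I : Finset (Fin 6), I.card = 4 → 2 * a + ∑ i ∈ I, b i ≤ 0)
    (h4 : ∀ i j : Fin 6, i ≠ j → a + b i + b j ≤ 1)
    (h5 : ∀ i : Fin 6, 2 * a - b i + ∑ j, b j ≤ 1) :
    ∃ k : ℤ, (k = 0 ∨ k = 1) ∧ a = -2 * k ∧ ∀ i, b i = k := by
  have hsum6 : ∑ k, b k = b 0 + b 1 + b 2 + b 3 + b 4 + b 5 := by
    rw [Fin.sum_univ_six]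
  have key : ∀ i j : Fin 6, i ≠ j →
      2 * a + (b 0 + b 1 + b 2 + b 3 + b 4 + b 5) - b i - b j ≤ 0 := by
    intro i j hij
    have hc : (({i, j} : Finset (Fin 6))ᶜ).card = 4 := by
      rw [Finset.card_compl, Finset.card_pair hij]; rfl
    have hs := h3 _ hc
    have hsum : ∑ k ∈ ({i, j} : Finset (Fin 6))ᶜ, b k
        + ∑ k ∈ ({i, j} : Finset (Fin 6)), b k = ∑ k, b k :=
      Finset.sum_compl_add_sum _ _
    rw [Finset.sum_pair hij] at hsum
    rw [hsum6] at hsum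
    linarith
  rw [hsum6] at h2
  have h50 := h5 0
  rw [hsum6] at h50
  have k01 := key 0 1 (by decide)
  have k02 := key 0 2 (by decide)
  have k03 := key 0 3 (by decide)
  have k04 := key 0 4 (by decide)
  have k05 := key 0 5 (by decide)
  have k12 := key 1 2 (by decide)
  have k13 := key 1 3 (by decide)
  have k14 := key 1 4 (by decide)
  have k15 := key 1 5 (by decide)
  have k23 := key 2 3 (by decide)
  have k24 := key 2 4 (by decide)
  have k25 := key 2 5 (by decide)
  have k34 := key 3 4 (by decide)
  have k35 := key 3 5 (by decide)
  have k45 := key 4 5 (by decide)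
  refine ⟨b 0, by omega, by omega, ?_⟩
  intro i
  fin_cases i <;> simp <;> omega
end

section
/- In the polynomial ring ℂ[x, y, z], the saturation of the product ideal (y − x, z)·(y², z²) with respect to the irrelevant ideal (x, y, z) equals the ideal (z², y²z, xy² − y³), and it coincides with the saturation of the intersection (y − x, z) ∩ (y², z²). -/
noncomputable section

open MvPolynomial

/-- The homogeneous coordinate ring ℂ[x, y, z]. -/
abbrev R3 : Type := MvPolynomial (Fin 3) ℂ

/-- The irrelevant ideal (x, y, z). -/
def irrel : Ideal R3 := Ideal.span {(X 0 : R3), X 1, X 2}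

/-- Saturation of an ideal with respect to the irrelevant ideal:
`{ f : (x,y,z)ⁿ · f ⊆ J for some n }`. -/
def sat (J : Ideal R3) : Set R3 :=
  {f | ∃ n : ℕ, ∀ g ∈ irrel ^ n, g * f ∈ J}

/-- The ideal (y − x, z) of the point p₀ = [1:1:0]. -/
def Ip0 : Ideal R3 := Ideal.span {(X 1 : R3) - X 0, X 2}

/-- The ideal (y², z²) of the length-4 complete intersection Q. -/
def IQ : Ideal R3 := Ideal.span {(X 1 : R3) ^ 2, (X 2) ^ 2}

/-! ### Auxiliary definitions -/

def Kid : Ideal R3 :=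
  Ideal.span {(X 2 : R3) ^ 2, (X 1) ^ 2 * X 2, X 0 * (X 1) ^ 2 - (X 1) ^ 3}

def SMset : Set (Fin 3 →₀ ℕ) :=
  {Finsupp.single 2 2, Finsupp.single 1 2 + Finsupp.single 2 1,
   Finsupp.single 0 1 + Finsupp.single 1 2}

def Mid : Ideal R3 := Ideal.span ((fun s => monomial s (1 : ℂ)) '' SMset)

def SPset : Set (Fin 3 →₀ ℕ) := {Finsupp.single 0 1, Finsupp.single 2 1}

def Pid : Ideal R3 := Ideal.span ((fun s => monomial s (1 : ℂ)) '' SPset)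

def SQset : Set (Fin 3 →₀ ℕ) := {Finsupp.single 1 2, Finsupp.single 2 2}

def Qid : Ideal R3 := Ideal.span ((fun s => monomial s (1 : ℂ)) '' SQset)

def sigA : R3 →ₐ[ℂ] R3 := aeval ![X 0 + X 1, X 1, X 2]

def tauA : R3 →ₐ[ℂ] R3 := aeval ![X 0 - X 1, X 1, X 2]

lemma sigA_X0 : sigA (X 0) = X 0 + X 1 := by simp [sigA]
lemma sigA_X1 : sigA (X 1) = X 1 := by simp [sigA]
lemma sigA_X2 : sigA (X 2) = X 2 := by simp [sigA]
lemma tauA_X0 : tauA (X 0) = X 0 - X 1 := by simp [tauA]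
lemma tauA_X1 : tauA (X 1) = X 1 := by simp [tauA]
lemma tauA_X2 : tauA (X 2) = X 2 := by simp [tauA]

lemma tau_sig (f : R3) : tauA (sigA f) = f := by
  have h : tauA.comp sigA = AlgHom.id ℂ R3 := by
    apply MvPolynomial.algHom_ext
    intro i
    fin_cases i <;>
      simp [sigA, tauA]
  have := congrArg (fun φ => φ f) (congrArg DFunLike.coe h)
  simpa using this

/-- mapping spans through an algebra hom -/
lemma algHom_span_mem {φ : R3 →ₐ[ℂ] R3} {s : Set R3} {I : Ideal R3}
    (h : ∀ a ∈ s, φ a ∈ I) : ∀ f ∈ Ideal.span s, φ f ∈ I := by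
  intro f hf
  induction hf using Submodule.span_induction with
  | mem x hx => exact h x hx
  | zero => simpa using I.zero_mem
  | add a b _ _ ha hb => rw [map_add]; exact I.add_mem ha hb
  | smul c x _ hx => rw [smul_eq_mul, map_mul]; exact I.mul_mem_left _ hx

lemma hX0mono : (X 0 : R3) = monomial (Finsupp.single 0 1) 1 := by
  rw [← pow_one (X 0 : R3), X_pow_eq_monomial]
lemma hX1mono : (X 1 : R3) = monomial (Finsupp.single 1 1) 1 := by
  rw [← pow_one (X 1 : R3), X_pow_eq_monomial]
lemma hX2mono : (X 2 : R3) = monomial (Finsupp.single 2 1) 1 := by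
  rw [← pow_one (X 2 : R3), X_pow_eq_monomial]

lemma mono_z2 : (X 2 : R3) ^ 2 = monomial (Finsupp.single 2 2) 1 := X_pow_eq_monomial
lemma mono_y2z : (X 1 : R3) ^ 2 * X 2 =
    monomial (Finsupp.single 1 2 + Finsupp.single 2 1) 1 := by
  rw [X_pow_eq_monomial, hX2mono, monomial_mul, one_mul]
lemma mono_xy2 : (X 0 : R3) * X 1 ^ 2 =
    monomial (Finsupp.single 0 1 + Finsupp.single 1 2) 1 := by
  rw [X_pow_eq_monomial, hX0mono, monomial_mul, one_mul]
lemma mono_y2 : (X 1 : R3) ^ 2 = monomial (Finsupp.single 1 2) 1 := X_pow_eq_monomial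

lemma memM_iff {f : R3} : f ∈ Mid ↔ ∀ m ∈ f.support,
    2 ≤ m 2 ∨ (2 ≤ m 1 ∧ 1 ≤ m 2) ∨ (1 ≤ m 0 ∧ 2 ≤ m 1) := by
  rw [Mid, mem_ideal_span_monomial_image]
  apply forall₂_congr
  intro m hm
  constructor
  · rintro ⟨si, hsi, hle⟩
    rw [Finsupp.le_def] at hle
    simp only [SMset, Set.mem_insert_iff, Set.mem_singleton_iff] at hsi
    rcases hsi with rfl | rfl | rfl
    · exact Or.inl (by simpa [Finsupp.single_apply] using hle 2)
    · exact Or.inr (Or.inl ⟨by simpa [Finsupp.single_apply] using hle 1,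
        by simpa [Finsupp.single_apply] using hle 2⟩)
    · exact Or.inr (Or.inr ⟨by simpa [Finsupp.single_apply] using hle 0,
        by simpa [Finsupp.single_apply] using hle 1⟩)
  · rintro (h | ⟨h1, h2⟩ | ⟨h1, h2⟩)
    · refine ⟨Finsupp.single 2 2, by simp [SMset], ?_⟩
      rw [Finsupp.le_def]; intro j; fin_cases j <;> simp [Finsupp.single_apply] <;> omega
    · refine ⟨Finsupp.single 1 2 + Finsupp.single 2 1, by simp [SMset], ?_⟩
      rw [Finsupp.le_def]; intro j; fin_cases j <;> simp [Finsupp.single_apply] <;> omega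
    · refine ⟨Finsupp.single 0 1 + Finsupp.single 1 2, by simp [SMset], ?_⟩
      rw [Finsupp.le_def]; intro j; fin_cases j <;> simp [Finsupp.single_apply] <;> omega

lemma memP_iff {f : R3} : f ∈ Pid ↔ ∀ m ∈ f.support, 1 ≤ m 0 ∨ 1 ≤ m 2 := by
  rw [Pid, mem_ideal_span_monomial_image]
  apply forall₂_congr
  intro m hm
  constructor
  · rintro ⟨si, hsi, hle⟩
    rw [Finsupp.le_def] at hle
    simp only [SPset, Set.mem_insert_iff, Set.mem_singleton_iff] at hsi
    rcases hsi with rfl | rfl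
    · exact Or.inl (by simpa [Finsupp.single_apply] using hle 0)
    · exact Or.inr (by simpa [Finsupp.single_apply] using hle 2)
  · rintro (h | h)
    · refine ⟨Finsupp.single 0 1, by simp [SPset], ?_⟩
      rw [Finsupp.le_def]; intro j; fin_cases j <;> simp [Finsupp.single_apply] <;> omega
    · refine ⟨Finsupp.single 2 1, by simp [SPset], ?_⟩
      rw [Finsupp.le_def]; intro j; fin_cases j <;> simp [Finsupp.single_apply] <;> omega

lemma memQ_iff {f : R3} : f ∈ Qid ↔ ∀ m ∈ f.support, 2 ≤ m 1 ∨ 2 ≤ m 2 := by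
  rw [Qid, mem_ideal_span_monomial_image]
  apply forall₂_congr
  intro m hm
  constructor
  · rintro ⟨si, hsi, hle⟩
    rw [Finsupp.le_def] at hle
    simp only [SQset, Set.mem_insert_iff, Set.mem_singleton_iff] at hsi
    rcases hsi with rfl | rfl
    · exact Or.inl (by simpa [Finsupp.single_apply] using hle 1)
    · exact Or.inr (by simpa [Finsupp.single_apply] using hle 2)
  · rintro (h | h)
    · refine ⟨Finsupp.single 1 2, by simp [SQset], ?_⟩
      rw [Finsupp.le_def]; intro j; fin_cases j <;> simp [Finsupp.single_apply] <;> omega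
    · refine ⟨Finsupp.single 2 2, by simp [SQset], ?_⟩
      rw [Finsupp.le_def]; intro j; fin_cases j <;> simp [Finsupp.single_apply] <;> omega
set_option linter.unnecessarySimpa false
set_option linter.unnecessarySeqFocus false

lemma memK_iff {f : R3} : f ∈ Kid ↔ sigA f ∈ Mid := by
  constructor
  · intro hf
    refine algHom_span_mem ?_ f hf
    rintro a ha
    simp only [Set.mem_insert_iff, Set.mem_singleton_iff] at ha
    rcases ha with rfl | rfl | rfl
    · rw [map_pow, sigA_X2, mono_z2]
      exact Ideal.subset_span ⟨_, by simp [SMset], rfl⟩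
    · rw [map_mul, map_pow, sigA_X1, sigA_X2, mono_y2z]
      exact Ideal.subset_span ⟨_, by simp [SMset], rfl⟩
    · have : sigA (X 0 * X 1 ^ 2 - X 1 ^ 3) = X 0 * X 1 ^ 2 := by
        rw [map_sub, map_mul, map_pow, map_pow, sigA_X0, sigA_X1]; ring
      rw [this, mono_xy2]
      exact Ideal.subset_span ⟨_, by simp [SMset], rfl⟩
  · intro hf
    have h2 : tauA (sigA f) ∈ Kid := by
      refine algHom_span_mem ?_ _ hf
      rintro a ⟨s, hs, rfl⟩
      dsimp only
      simp only [SMset, Set.mem_insert_iff, Set.mem_singleton_iff] at hs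
      rcases hs with rfl | rfl | rfl
      · rw [← mono_z2, map_pow, tauA_X2]
        exact Ideal.subset_span (by simp)
      · rw [← mono_y2z, map_mul, map_pow, tauA_X1, tauA_X2]
        exact Ideal.subset_span (by simp)
      · rw [← mono_xy2, map_mul, map_pow, tauA_X0, tauA_X1]
        have : ((X 0 : R3) - X 1) * X 1 ^ 2 = X 0 * X 1 ^ 2 - X 1 ^ 3 := by ring
        rw [this]
        exact Ideal.subset_span (by simp)
    rwa [tau_sig] at h2

lemma kl' (f : R3) (hx : X 0 * f ∈ Mid) (hy : X 1 * f ∈ Mid) (hz : X 2 * f ∈ Mid) :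
    f ∈ Mid := by
  rw [memM_iff] at hx hy hz ⊢
  intro m hm
  have Hx := hx _ (by rw [support_X_mul]; exact Finset.mem_map_of_mem _ hm)
  have Hy := hy _ (by rw [support_X_mul]; exact Finset.mem_map_of_mem _ hm)
  have Hz := hz _ (by rw [support_X_mul]; exact Finset.mem_map_of_mem _ hm)
  simp [addLeftEmbedding_apply, Finsupp.add_apply, Finsupp.single_apply] at Hx Hy Hz
  omega

lemma klK (f : R3) (hx : X 0 * f ∈ Kid) (hy : X 1 * f ∈ Kid) (hz : X 2 * f ∈ Kid) :
    f ∈ Kid := by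
  rw [memK_iff] at hx hy hz ⊢
  rw [map_mul, sigA_X0] at hx
  rw [map_mul, sigA_X1] at hy
  rw [map_mul, sigA_X2] at hz
  have hx' : X 0 * sigA f ∈ Mid := by
    have : (X 0 : R3) * sigA f = (X 0 + X 1) * sigA f - X 1 * sigA f := by ring
    rw [this]; exact Mid.sub_mem hx hy
  exact kl' _ hx' hy hz

lemma satK : ∀ (n : ℕ) (f : R3), (∀ g ∈ irrel ^ n, g * f ∈ Kid) → f ∈ Kid := by
  intro n
  induction n with
  | zero =>
    intro f h
    have := h 1 (by simp [Ideal.one_eq_top])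
    simpa using this
  | succ n ih =>
    intro f h
    refine ih f ?_
    intro g hg
    have key : ∀ i : Fin 3, X i * (g * f) ∈ Kid := by
      intro i
      have hXi : (X i : R3) ∈ irrel := by
        fin_cases i <;> exact Ideal.subset_span (by simp)
      have hgi : g * X i ∈ irrel ^ (n + 1) := by
        rw [pow_succ]
        exact Ideal.mul_mem_mul hg hXi
      have := h _ hgi
      have e : g * X i * f = X i * (g * f) := by ring
      rwa [e] at this
    exact klK _ (key 0) (key 1) (key 2)

lemma JleK : Ip0 * IQ ≤ Kid := by
  rw [Ip0, IQ, Ideal.span_mul_span']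
  rw [Ideal.span_le, Set.mul_subset_iff]
  intro a ha b hb
  simp only [Set.mem_insert_iff, Set.mem_singleton_iff] at ha hb
  have g1 : (X 2 : R3) ^ 2 ∈ Kid := Ideal.subset_span (by simp)
  have g2 : (X 1 : R3) ^ 2 * X 2 ∈ Kid := Ideal.subset_span (by simp)
  have g3 : (X 0 : R3) * X 1 ^ 2 - X 1 ^ 3 ∈ Kid := Ideal.subset_span (by simp)
  rcases ha with rfl | rfl <;> rcases hb with rfl | rfl
  · have e : ((X 1 : R3) - X 0) * X 1 ^ 2 = -(X 0 * X 1 ^ 2 - X 1 ^ 3) := by ring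
    rw [e]; exact Kid.neg_mem g3
  · exact Kid.mul_mem_left _ g1
  · have e : (X 2 : R3) * X 1 ^ 2 = X 1 ^ 2 * X 2 := by ring
    rw [e]; exact g2
  · exact Kid.mul_mem_left _ g1

lemma irrelK : ∀ g ∈ irrel ^ 2, ∀ f ∈ Kid, g * f ∈ Ip0 * IQ := by
  have hmul : irrel ^ 2 * Kid ≤ Ip0 * IQ := by
    rw [pow_two, irrel, Kid, Ideal.span_mul_span', Ideal.span_mul_span']
    rw [Ideal.span_le, Set.mul_subset_iff]
    intro u hu k hk
    have hA : ((X 1 : R3) - X 0) * X 2 ^ 2 ∈ Ip0 * IQ :=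
      Ideal.mul_mem_mul (Ideal.subset_span (by simp)) (Ideal.subset_span (by simp))
    have hB : (X 2 : R3) * X 1 ^ 2 ∈ Ip0 * IQ :=
      Ideal.mul_mem_mul (Ideal.subset_span (by simp)) (Ideal.subset_span (by simp))
    have hC : (X 2 : R3) * X 2 ^ 2 ∈ Ip0 * IQ :=
      Ideal.mul_mem_mul (Ideal.subset_span (by simp)) (Ideal.subset_span (by simp))
    have hD : ((X 1 : R3) - X 0) * X 1 ^ 2 ∈ Ip0 * IQ :=
      Ideal.mul_mem_mul (Ideal.subset_span (by simp)) (Ideal.subset_span (by simp))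
    simp only [Set.mem_insert_iff, Set.mem_singleton_iff] at hk
    set J := Ip0 * IQ with hJ
    rcases hk with rfl | rfl | rfl
    · -- k = z²
      rcases Set.mem_mul.mp hu with ⟨a, ha, b, hb, rfl⟩
      simp only [Set.mem_insert_iff, Set.mem_singleton_iff] at ha hb
      rcases ha with rfl | rfl | rfl <;> rcases hb with rfl | rfl | rfl
      · have e : (X 0 : R3) * X 0 * X 2 ^ 2 =
            X 2 * (X 2 * X 1 ^ 2) - X 1 * (((X 1 : R3) - X 0) * X 2 ^ 2)
              - X 0 * (((X 1 : R3) - X 0) * X 2 ^ 2) := by ring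
        rw [e]
        exact J.sub_mem (J.sub_mem (J.mul_mem_left _ hB) (J.mul_mem_left _ hA))
          (J.mul_mem_left _ hA)
      · have e : (X 0 : R3) * X 1 * X 2 ^ 2 =
            X 2 * (X 2 * X 1 ^ 2) - X 1 * (((X 1 : R3) - X 0) * X 2 ^ 2) := by ring
        rw [e]
        exact J.sub_mem (J.mul_mem_left _ hB) (J.mul_mem_left _ hA)
      · have e : (X 0 : R3) * X 2 * X 2 ^ 2 = X 0 * (X 2 * X 2 ^ 2) := by ring
        rw [e]; exact J.mul_mem_left _ hC
      · have e : (X 1 : R3) * X 0 * X 2 ^ 2 =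
            X 2 * (X 2 * X 1 ^ 2) - X 1 * (((X 1 : R3) - X 0) * X 2 ^ 2) := by ring
        rw [e]
        exact J.sub_mem (J.mul_mem_left _ hB) (J.mul_mem_left _ hA)
      · have e : (X 1 : R3) * X 1 * X 2 ^ 2 = X 2 * (X 2 * X 1 ^ 2) := by ring
        rw [e]
        exact J.mul_mem_left _ hB
      · have e : (X 1 : R3) * X 2 * X 2 ^ 2 = X 1 * (X 2 * X 2 ^ 2) := by ring
        rw [e]; exact J.mul_mem_left _ hC
      · have e : (X 2 : R3) * X 0 * X 2 ^ 2 = X 0 * (X 2 * X 2 ^ 2) := by ring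
        rw [e]; exact J.mul_mem_left _ hC
      · have e : (X 2 : R3) * X 1 * X 2 ^ 2 = X 1 * (X 2 * X 2 ^ 2) := by ring
        rw [e]; exact J.mul_mem_left _ hC
      · have e : (X 2 : R3) * X 2 * X 2 ^ 2 = X 2 * (X 2 * X 2 ^ 2) := by ring
        rw [e]; exact J.mul_mem_left _ hC
    · -- k = y²z ∈ J
      have hk' : (X 1 : R3) ^ 2 * X 2 ∈ J := by
        have e : (X 1 : R3) ^ 2 * X 2 = X 2 * X 1 ^ 2 := by ring
        rw [e]; exact hB
      exact J.mul_mem_left _ hk'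
    · -- k = xy² − y³ ∈ J
      have hk' : (X 0 : R3) * X 1 ^ 2 - X 1 ^ 3 ∈ J := by
        have e : (X 0 : R3) * X 1 ^ 2 - X 1 ^ 3 = -(((X 1 : R3) - X 0) * X 1 ^ 2) := by ring
        rw [e]; exact J.neg_mem hD
      exact J.mul_mem_left _ hk'
  intro g hg f hf
  exact hmul (Ideal.mul_mem_mul hg hf)

lemma infLeK : Ip0 ⊓ IQ ≤ Kid := by
  rintro f ⟨h1, h2⟩
  rw [memK_iff]
  have hP : sigA f ∈ Pid := by
    refine algHom_span_mem ?_ f h1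
    rintro a ha
    simp only [Set.mem_insert_iff, Set.mem_singleton_iff] at ha
    rcases ha with rfl | rfl
    · have e : sigA (X 1 - X 0) = -(X 0 : R3) := by
        rw [map_sub, sigA_X0, sigA_X1]; ring
      rw [e]
      exact Pid.neg_mem (Ideal.subset_span ⟨_, by simp [SPset], hX0mono.symm⟩)
    · rw [sigA_X2]
      exact Ideal.subset_span ⟨_, by simp [SPset], hX2mono.symm⟩
  have hQ : sigA f ∈ Qid := by
    refine algHom_span_mem ?_ f h2
    rintro a ha
    simp only [Set.mem_insert_iff, Set.mem_singleton_iff] at ha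
    rcases ha with rfl | rfl
    · rw [map_pow, sigA_X1]
      exact Ideal.subset_span ⟨_, by simp [SQset], mono_y2.symm⟩
    · rw [map_pow, sigA_X2]
      exact Ideal.subset_span ⟨_, by simp [SQset], mono_z2.symm⟩
  rw [memP_iff] at hP
  rw [memQ_iff] at hQ
  rw [memM_iff]
  intro m hm
  have := hP m hm
  have := hQ m hm
  omega

theorem stmt6 :
    sat (Ip0 * IQ)
        = ↑(Ideal.span {(X 2 : R3) ^ 2, (X 1) ^ 2 * X 2, X 0 * (X 1) ^ 2 - (X 1) ^ 3}) ∧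
    sat (Ip0 * IQ) = sat (Ip0 ⊓ IQ) := by
  have hKid : (Ideal.span {(X 2 : R3) ^ 2, (X 1) ^ 2 * X 2,
      X 0 * (X 1) ^ 2 - (X 1) ^ 3}) = Kid := rfl
  have h1 : sat (Ip0 * IQ) = ↑Kid := by
    apply Set.eq_of_subset_of_subset
    · rintro f ⟨n, hn⟩
      exact satK n f fun g hg => JleK (hn g hg)
    · intro f hf
      exact ⟨2, fun g hg => irrelK g hg f hf⟩
  constructor
  · rw [hKid]; exact h1
  · apply Set.eq_of_subset_of_subset
    · rintro f ⟨n, hn⟩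
      exact ⟨n, fun g hg => Ideal.mul_le_inf (hn g hg)⟩
    · rintro f ⟨n, hn⟩
      rw [h1]
      exact satK n f fun g hg => infLeK (hn g hg)
end
end
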